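/- arXiv:1311.7113 — 2 statements merged into one kernel-verified Lean document; each statement's English description precedes it below -/
import Mathlib

section
/- Let h_1, ..., h_{k−1} and M_t be integers such that for every integer vector e ∈ Z^{k−1} with Manhattan weight ||e|| ≤ t, the sums Σ_{i=1}^{k−1} e_i·h_i are all distinct modulo M_t. Assume there exists a code C_r ⊆ S(M_{k,r}) with minimum Kendall τ-distance 2t and size |C_r| ≥ M_t, and let ρ_0, ρ_1, ..., ρ_{M_t−1} be distinct multi-permutations in C_r. Define C = { σ ∗ ρ_j : σ ∈ S_k, Σ_{i=1}^{k−1} (ψ(σ))_{i+1}·h_i ≡ j (mod M_t) } ⊆ S_{k+r}. Then C is a (k+r, k) systematic t-error-correcting code: for every σ ∈ S_k there exists exactly one α ∈ C with α_{↓k} = σ, and distinct codewords of C have Kendall τ-distance at least 2t+1. -/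
/-- `AdjTrans σ π` : the sequence `π` is obtained from the sequence `σ` by exchanging
two distinct adjacent elements (an adjacent transposition). -/
def AdjTrans (σ π : List ℤ) : Prop :=
  ∃ (l₁ l₂ : List ℤ) (a b : ℤ), a ≠ b ∧ σ = l₁ ++ a :: b :: l₂ ∧ π = l₁ ++ b :: a :: l₂

/-- `StepsTo n σ π` : `π` can be obtained from `σ` by a sequence of `n` adjacent
transpositions. -/
def StepsTo : ℕ → List ℤ → List ℤ → Prop
  | 0 => fun σ π => σ = π
  | n + 1 => fun σ π => ∃ τ, AdjTrans σ τ ∧ StepsTo n τ π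

/-- The Kendall τ-distance between two sequences: the minimum number of adjacent
transpositions needed to transform one into the other. -/
noncomputable def dK (σ π : List ℤ) : ℕ := sInf {n | StepsTo n σ π}

/-- The list `[a, a+1, ..., a+len-1]` of integers. -/
def rangeList (a len : ℕ) : List ℤ := (List.range' a len).map (fun x => (x : ℤ))

/-- The substitution map `T_θ`: the `r`-th occurrence (from the left, `0`-indexed) of a
rank `a` in `σ` is replaced by the `r`-th entry of the list `θ a`. -/
def Tmap (θ : ℤ → List ℤ) (σ : List ℤ) : List ℤ :=
  (List.range σ.length).map (fun j =>
    (θ (σ.getD j 0)).getD ((σ.take j).count (σ.getD j 0)) 0)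

/-- `psiEntry σ a s` : the number of positions in `σ` strictly to the right of the `s`-th
occurrence (`0`-indexed) of `a` in `σ` that hold an element smaller than `a`. -/
def psiEntry (σ : List ℤ) (a : ℤ) (s : ℕ) : ℕ :=
  (σ.drop (((σ.indexesOf a).getD s σ.length) + 1)).countP (fun x => decide (x < a))

/-- The Manhattan distance between two vectors of naturals (presented as lists). -/
def manhattanL (x y : List ℕ) : ℕ :=
  ∑ i ∈ Finset.range (max x.length y.length), ((x.getD i 0 : ℤ) - (y.getD i 0 : ℤ)).natAbs

/-- The Lee distance over `Z_q` between two vectors with entries in `{0, …, q-1}`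
(presented as lists). -/
def leeDistL (q : ℕ) (x y : List ℕ) : ℕ :=
  ∑ i ∈ Finset.range (max x.length y.length),
    min (((x.getD i 0 : ℤ) - (y.getD i 0 : ℤ)).natAbs)
      (q - ((x.getD i 0 : ℤ) - (y.getD i 0 : ℤ)).natAbs)

/-- The Lee distance between two vectors over `ZMod q`. -/
def zmodLee {q N : ℕ} (x y : Fin N → ZMod q) : ℕ :=
  ∑ i, min (x i - y i).val (y i - x i).val

/-- `permList k σ` : `σ` is (an ordering representing) a permutation of `{1, …, k}`. -/
def permList (k : ℕ) (σ : List ℤ) : Prop :=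
  (↑σ : Multiset ℤ) = (↑(rangeList 1 k) : Multiset ℤ)

/-- The multiset `M_{k,r} = {0^k, k+1, …, k+r}`. -/
def Mkr (k r : ℕ) : Multiset ℤ :=
  Multiset.replicate k (0 : ℤ) + (↑(rangeList (k + 1) r) : Multiset ℤ)

/-- `α_{↓k}` : delete from `α` all elements larger than `k`. -/
def restrictTo (k : ℕ) (α : List ℤ) : List ℤ :=
  α.filter (fun x => decide (x ≤ (k : ℤ)))

/-- `α_{k↦0}` : replace in `α` every element of `{1, …, k}` by `0`. -/
def mapToZero (k : ℕ) (α : List ℤ) : List ℤ :=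
  α.map (fun x => if 1 ≤ x ∧ x ≤ (k : ℤ) then 0 else x)

/-- `star σ ρ = σ ∗ ρ` : replace the zeros of `ρ`, from left to right, by the elements
of `σ` in order. -/
def starP : List ℤ → List ℤ → List ℤ
  | _, [] => []
  | σ, x :: ρ' => if x = 0 then σ.headD 0 :: starP σ.tail ρ' else x :: starP σ ρ'

/-!
An adjacent transposition of `α = σ ∗ ρ` either swaps two entries of `{1, …, k}`, acting as an
adjacent transposition on `α_{↓k} = σ` and fixing the zero pattern `ρ`, or it acts on `ρ` and
fixes `σ`. Hence `d_K(σ ∗ ρ, σ' ∗ ρ') ≥ d_K(σ, σ') + d_K(ρ, ρ')`, which is at least `1 + 2t` when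
the two codewords use different `ρ_j`. When they use the same `ρ_j`, the syndromes
`∑ ψ(σ)_{i+1} h_i` agree modulo `M_t`. An adjacent transposition changes the inversion vector `ψ`
by one in a single coordinate, so `d_K(σ, σ') ≥ ‖ψ(σ) - ψ(σ')‖`; and a difference of Manhattan
weight at most `2t` is `e - e'` with `‖e‖, ‖e'‖ ≤ t`, which the hypothesis on `h` forbids unless
`ψ(σ) = ψ(σ')`, i.e. `σ = σ'`.
-/

theorem AdjTrans.perm {σ π : List ℤ} (h : AdjTrans σ π) : σ.Perm π := by
  obtain ⟨l₁, l₂, a, b, -, rfl, rfl⟩ := h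
  exact (List.Perm.swap b a l₂).append_left l₁

theorem StepsTo.perm : ∀ {n : ℕ} {σ π : List ℤ}, StepsTo n σ π → σ.Perm π
  | 0, _, _, (h : _ = _) => h ▸ .refl _
  | _ + 1, _, _, ⟨_, h₁, h₂⟩ => h₁.perm.trans h₂.perm

theorem StepsTo.trans : ∀ {m n : ℕ} {σ τ π : List ℤ},
    StepsTo m σ τ → StepsTo n τ π → StepsTo (m + n) σ π
  | 0, n, _, _, _, (h₁ : _ = _), h₂ => by rw [Nat.zero_add, h₁]; exact h₂
  | m + 1, n, _, _, _, ⟨ρ, h₁, h₂⟩, h₃ => by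
      rw [Nat.add_right_comm]; exact ⟨ρ, h₁, h₂.trans h₃⟩

theorem StepsTo.cons (x : ℤ) : ∀ {n : ℕ} {σ π : List ℤ},
    StepsTo n σ π → StepsTo n (x :: σ) (x :: π)
  | 0, _, _, (h : _ = _) => congrArg (x :: ·) h
  | _ + 1, _, _, ⟨_, ⟨l₁, l₂, a, b, hab, rfl, rfl⟩, h⟩ =>
      ⟨_, ⟨x :: l₁, l₂, a, b, hab, rfl, rfl⟩, h.cons x⟩

theorem List.Perm.exists_stepsTo {σ π : List ℤ} (h : σ.Perm π) : ∃ n, StepsTo n σ π := by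
  induction h with
  | nil => exact ⟨0, rfl⟩
  | cons x _ ih => exact ih.imp fun _ => StepsTo.cons x
  | swap x y l =>
    by_cases hxy : x = y
    · exact ⟨0, by rw [hxy]; rfl⟩
    · exact ⟨1, _, ⟨[], l, y, x, Ne.symm hxy, rfl, rfl⟩, rfl⟩
  | trans _ _ ih₁ ih₂ =>
    obtain ⟨m, hm⟩ := ih₁
    obtain ⟨n, hn⟩ := ih₂
    exact ⟨m + n, hm.trans hn⟩

theorem dK_le {n : ℕ} {σ π : List ℤ} (h : StepsTo n σ π) : dK σ π ≤ n := Nat.sInf_le h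

theorem stepsTo_dK {σ π : List ℤ} (h : σ.Perm π) : StepsTo (dK σ π) σ π :=
  Nat.sInf_mem h.exists_stepsTo

theorem one_le_dK {σ π : List ℤ} (h : σ.Perm π) (hne : σ ≠ π) : 1 ≤ dK σ π := by
  by_contra! h0
  have h₀ := stepsTo_dK h
  rw [Nat.lt_one_iff.mp h0] at h₀
  exact hne h₀

theorem rangeList_eq_map (a len : ℕ) : rangeList a len = (List.range' a len).map (↑) := by
  simp [rangeList, ← List.map_eq_flatMap]

theorem mem_rangeList {a len : ℕ} {x : ℤ} : x ∈ rangeList a len ↔ a ≤ x ∧ x < a + len := by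
  simp only [rangeList_eq_map, List.mem_map, List.mem_range'_1]
  constructor
  · rintro ⟨y, hy, rfl⟩
    omega
  · intro hx
    exact ⟨x.toNat, by omega, by omega⟩

theorem rangeList_add (a m n : ℕ) : rangeList a (m + n) = rangeList a m ++ rangeList (a + m) n := by
  rw [rangeList_eq_map, rangeList_eq_map, rangeList_eq_map, ← List.range'_append_1,
    List.map_append]

theorem rangeList_succ (a n : ℕ) : rangeList a (n + 1) = rangeList a n ++ [((a + n : ℕ) : ℤ)] := by
  rw [rangeList_eq_map, rangeList_eq_map, List.range'_1_concat, List.map_append, List.map_singleton]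

namespace permList

variable {k : ℕ} {σ σ' : List ℤ}

theorem length_eq (h : permList k σ) : σ.length = k := by
  simpa [rangeList] using congrArg Multiset.card h

theorem mem_iff (h : permList k σ) {x : ℤ} : x ∈ σ ↔ 1 ≤ x ∧ x ≤ k := by
  rw [← Multiset.mem_coe, h, Multiset.mem_coe, mem_rangeList]
  omega

theorem perm (h : permList k σ) (h' : permList k σ') : σ.Perm σ' :=
  Multiset.coe_eq_coe.mp (h.trans h'.symm)

theorem exists_eq_append_cons (h : permList (k + 1) σ) :
    ∃ l₁ l₂, σ = l₁ ++ ((k : ℤ) + 1) :: l₂ ∧ permList k (l₁ ++ l₂) := by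
  obtain ⟨l₁, l₂, rfl⟩ := List.append_of_mem ((h.mem_iff (x := k + 1)).mpr (by omega))
  refine ⟨l₁, l₂, rfl, ?_⟩
  have hperm : (((k : ℤ) + 1) :: (l₁ ++ l₂)).Perm (((k : ℤ) + 1) :: rangeList 1 k) := by
    refine List.perm_middle.symm.trans ((Multiset.coe_eq_coe.mp h).trans ?_)
    rw [rangeList_succ, Nat.cast_add, Nat.cast_one, add_comm 1]
    exact List.perm_append_singleton _ _
  exact Multiset.coe_eq_coe.mpr hperm.cons_inv

end permList

theorem count_zero_of_coe_eq_Mkr {k r : ℕ} {ρ : List ℤ} (h : (ρ : Multiset ℤ) = Mkr k r) :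
    ρ.count 0 = k := by
  rw [← Multiset.coe_count, h, Mkr, Multiset.count_add, Multiset.count_replicate_self,
    Multiset.coe_count, List.count_eq_zero.mpr (by simp [mem_rangeList]), add_zero]

theorem eq_zero_or_lt_of_coe_eq_Mkr {k r : ℕ} {ρ : List ℤ} (h : (ρ : Multiset ℤ) = Mkr k r)
    {x : ℤ} (hx : x ∈ ρ) : x = 0 ∨ k < x := by
  rw [← Multiset.mem_coe, h, Mkr, Multiset.mem_add, Multiset.mem_replicate, Multiset.mem_coe,
    mem_rangeList] at hx
  omega

theorem filter_ne_zero_Mkr (k r : ℕ) :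
    (Mkr k r).filter (· ≠ 0) = ↑(rangeList (k + 1) r) := by
  rw [Mkr, Multiset.filter_add, Multiset.filter_eq_nil.mpr
    (fun _ ha => by simp [Multiset.eq_of_mem_replicate ha]), zero_add,
    Multiset.filter_eq_self.mpr (by simp [mem_rangeList]; omega)]

section starP

variable {σ ρ : List ℤ}

theorem starP_perm (h : ρ.count 0 = σ.length) : (starP σ ρ).Perm (σ ++ ρ.filter (· ≠ 0)) := by
  induction ρ generalizing σ with
  | nil => simp_all [starP, List.length_eq_zero_iff.mp h.symm]
  | cons x ρ ih =>
    by_cases hx : x = 0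
    · subst hx
      rw [List.count_cons_self] at h
      obtain ⟨s, σ, rfl⟩ := List.exists_cons_of_length_eq_add_one h.symm
      simpa [starP] using (ih (σ := σ) (by simp_all)).cons s
    · simpa [starP, hx] using ((ih (σ := σ) (by simp_all)).cons x).trans List.perm_middle.symm

theorem filter_starP (p : ℤ → Bool) (h : ρ.count 0 = σ.length) (hσ : ∀ x ∈ σ, p x)
    (hρ : ∀ x ∈ ρ, x ≠ 0 → ¬ p x) : (starP σ ρ).filter p = σ := by
  induction ρ generalizing σ with
  | nil => simp_all [starP, List.length_eq_zero_iff.mp h.symm]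
  | cons x ρ ih =>
    by_cases hx : x = 0
    · subst hx
      rw [List.count_cons_self] at h
      obtain ⟨s, σ, rfl⟩ := List.exists_cons_of_length_eq_add_one h.symm
      simp_all [starP]
    · simp_all [starP]

theorem map_starP (f : ℤ → ℤ) (h : ρ.count 0 = σ.length) (hσ : ∀ x ∈ σ, f x = 0)
    (hρ : ∀ x ∈ ρ, x ≠ 0 → f x = x) : (starP σ ρ).map f = ρ := by
  induction ρ generalizing σ with
  | nil => simp_all [starP, List.length_eq_zero_iff.mp h.symm]
  | cons x ρ ih =>
    by_cases hx : x = 0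
    · subst hx
      rw [List.count_cons_self] at h
      obtain ⟨s, σ, rfl⟩ := List.exists_cons_of_length_eq_add_one h.symm
      simp_all [starP]
    · simp_all [starP]

end starP

section Codewords

variable {k r : ℕ} {σ ρ : List ℤ}

theorem count_zero_eq_length (hσ : permList k σ) (hρ : (ρ : Multiset ℤ) = Mkr k r) :
    ρ.count 0 = σ.length := by
  rw [count_zero_of_coe_eq_Mkr hρ, hσ.length_eq]

theorem permList_starP (hσ : permList k σ) (hρ : (ρ : Multiset ℤ) = Mkr k r) :
    permList (k + r) (starP σ ρ) := by
  rw [permList, Multiset.coe_eq_coe.mpr (starP_perm (count_zero_eq_length hσ hρ)),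
    ← Multiset.coe_add, hσ, ← Multiset.filter_coe, hρ, filter_ne_zero_Mkr, Multiset.coe_add,
    rangeList_add, add_comm 1 k]

theorem restrictTo_starP (hσ : permList k σ) (hρ : (ρ : Multiset ℤ) = Mkr k r) :
    restrictTo k (starP σ ρ) = σ := by
  refine filter_starP _ (count_zero_eq_length hσ hρ) (fun x hx => ?_) (fun x hx hx0 => ?_)
  · simpa using (hσ.mem_iff.mp hx).2
  · have := eq_zero_or_lt_of_coe_eq_Mkr hρ hx
    simp only [decide_eq_true_eq, not_le]
    omega

theorem mapToZero_starP (hσ : permList k σ) (hρ : (ρ : Multiset ℤ) = Mkr k r) :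
    mapToZero k (starP σ ρ) = ρ := by
  refine map_starP _ (count_zero_eq_length hσ hρ) (fun x hx => if_pos (hσ.mem_iff.mp hx))
    (fun x hx hx0 => if_neg ?_)
  have := eq_zero_or_lt_of_coe_eq_Mkr hρ hx
  omega

end Codewords

section Projection

variable {k : ℕ} {α β : List ℤ}

theorem adjTrans_filter_append (p : ℤ → Bool) (l₁ l₂ : List ℤ) {a b : ℤ} (hab : a ≠ b)
    (ha : p a) (hb : p b) :
    AdjTrans ((l₁ ++ a :: b :: l₂).filter p) ((l₁ ++ b :: a :: l₂).filter p) :=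
  ⟨l₁.filter p, l₂.filter p, a, b, hab, by simp [ha, hb], by simp [ha, hb]⟩

theorem adjTrans_map_append (f : ℤ → ℤ) (l₁ l₂ : List ℤ) {a b : ℤ} (h : f a ≠ f b) :
    AdjTrans ((l₁ ++ a :: b :: l₂).map f) ((l₁ ++ b :: a :: l₂).map f) :=
  ⟨l₁.map f, l₂.map f, f a, f b, h, by simp, by simp⟩

theorem AdjTrans.restrictTo_or_mapToZero (hpos : ∀ x ∈ α, 1 ≤ x) (h : AdjTrans α β) :
    (AdjTrans (restrictTo k α) (restrictTo k β) ∧ mapToZero k α = mapToZero k β) ∨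
      (restrictTo k α = restrictTo k β ∧ AdjTrans (mapToZero k α) (mapToZero k β)) := by
  obtain ⟨l₁, l₂, a, b, hab, rfl, rfl⟩ := h
  have ha : 1 ≤ a := hpos a (by simp)
  have hb : 1 ≤ b := hpos b (by simp)
  by_cases hk : a ≤ k ∧ b ≤ k
  · refine .inl ⟨adjTrans_filter_append _ l₁ l₂ hab (by simpa using hk.1) (by simpa using hk.2),
      by simp [mapToZero, ha, hb, hk]⟩
  · refine .inr ⟨?_, adjTrans_map_append _ l₁ l₂ ?_⟩
    · rcases not_and_or.mp hk with h | h <;> simp [restrictTo, List.filter_cons, h]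
    · split_ifs <;> omega

theorem StepsTo.restrictTo_mapToZero {n : ℕ} (hpos : ∀ x ∈ α, 1 ≤ x) (h : StepsTo n α β) :
    ∃ m₁ m₂, m₁ + m₂ ≤ n ∧ StepsTo m₁ (restrictTo k α) (restrictTo k β) ∧
      StepsTo m₂ (mapToZero k α) (mapToZero k β) := by
  induction n generalizing α with
  | zero =>
    obtain rfl : α = β := h
    exact ⟨0, 0, le_rfl, rfl, rfl⟩
  | succ n ih =>
    obtain ⟨τ, hατ, hτβ⟩ := h
    obtain ⟨m₁, m₂, hm, h₁, h₂⟩ := ih (fun x hx => hpos x (hατ.perm.mem_iff.mpr hx)) hτβ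
    rcases hατ.restrictTo_or_mapToZero hpos with ⟨hA, hE⟩ | ⟨hE, hA⟩
    · exact ⟨m₁ + 1, m₂, by omega, ⟨_, hA, h₁⟩, hE ▸ h₂⟩
    · exact ⟨m₁, m₂ + 1, by omega, hE ▸ h₁, ⟨_, hA, h₂⟩⟩

theorem dK_restrictTo_add_dK_mapToZero_le (hpos : ∀ x ∈ α, 1 ≤ x) (h : α.Perm β) :
    dK (restrictTo k α) (restrictTo k β) + dK (mapToZero k α) (mapToZero k β) ≤ dK α β := by
  obtain ⟨m₁, m₂, hm, h₁, h₂⟩ := (stepsTo_dK h).restrictTo_mapToZero (k := k) hpos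
  exact (add_le_add (dK_le h₁) (dK_le h₂)).trans hm

end Projection

section Psi

variable {a x : ℤ}

theorem psiEntry_cons (l : List ℤ) :
    psiEntry (x :: l) a 0 = if x = a then l.countP (· < a) else psiEntry l a 0 := by
  unfold psiEntry
  rw [List.indexesOf, List.idxsOf_cons, List.idxsOf_start (s := 1)]
  by_cases h : x = a
  · simp [h]
  · simp only [h, beq_iff_eq, if_false, List.length_cons,
      List.getD_map _ l.length (· + 1), List.drop_succ_cons]

theorem psiEntry_cons_self (l : List ℤ) : psiEntry (a :: l) a 0 = l.countP (· < a) := by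
  simp [psiEntry_cons]

theorem psiEntry_cons_of_ne (h : x ≠ a) (l : List ℤ) : psiEntry (x :: l) a 0 = psiEntry l a 0 := by
  simp [psiEntry_cons, h]

theorem psiEntry_append_of_notMem {l₁ : List ℤ} (h : a ∉ l₁) (l₂ : List ℤ) :
    psiEntry (l₁ ++ l₂) a 0 = psiEntry l₂ a 0 := by
  induction l₁ with
  | nil => rfl
  | cons x l₁ ih =>
    rw [List.mem_cons, not_or] at h
    rw [List.cons_append, psiEntry_cons_of_ne (Ne.symm h.1), ih h.2]

theorem psiEntry_append_of_mem {l₁ : List ℤ} (h : a ∈ l₁) (l₂ : List ℤ) :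
    psiEntry (l₁ ++ l₂) a 0 = psiEntry l₁ a 0 + l₂.countP (· < a) := by
  induction l₁ with
  | nil => simp at h
  | cons x l₁ ih =>
    by_cases hx : x = a
    · simp [hx, psiEntry_cons_self, List.countP_append]
    · rw [List.cons_append, psiEntry_cons_of_ne hx, psiEntry_cons_of_ne hx,
        ih (List.mem_of_ne_of_mem (Ne.symm hx) h)]

theorem psiEntry_append_cons_of_lt {b : ℤ} (hab : a < b) (l₁ l₂ : List ℤ) :
    psiEntry (l₁ ++ b :: l₂) a 0 = psiEntry (l₁ ++ l₂) a 0 := by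
  by_cases ha : a ∈ l₁
  · rw [psiEntry_append_of_mem ha, psiEntry_append_of_mem ha, List.countP_cons,
      if_neg (by simpa using hab.le), add_zero]
  · rw [psiEntry_append_of_notMem ha, psiEntry_append_of_notMem ha, psiEntry_cons_of_ne hab.ne']

theorem AdjTrans.psiEntry_eq_except {σ τ : List ℤ} (h : AdjTrans σ τ) :
    ∃ c, (∀ v, v ≠ c → psiEntry σ v 0 = psiEntry τ v 0) ∧
      ((psiEntry σ c 0 : ℤ) - psiEntry τ c 0).natAbs ≤ 1 := by
  obtain ⟨l₁, l₂, a, b, hab, rfl, rfl⟩ := h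
  have hl₁ : ∀ v ∈ l₁, psiEntry (l₁ ++ a :: b :: l₂) v 0 = psiEntry (l₁ ++ b :: a :: l₂) v 0 :=
    fun v hv => by
      rw [psiEntry_append_of_mem hv, psiEntry_append_of_mem hv, (List.Perm.swap a b l₂).countP_eq]
  refine ⟨max a b, fun v hv => ?_, ?_⟩
  · by_cases hv₁ : v ∈ l₁
    · exact hl₁ v hv₁
    · rw [psiEntry_append_of_notMem hv₁, psiEntry_append_of_notMem hv₁]
      simp only [psiEntry_cons, List.countP_cons, decide_eq_true_eq]
      split_ifs <;> omega
  · by_cases hv₁ : max a b ∈ l₁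
    · simp [hl₁ _ hv₁]
    · rw [psiEntry_append_of_notMem hv₁, psiEntry_append_of_notMem hv₁]
      simp only [psiEntry_cons, List.countP_cons, decide_eq_true_eq]
      split_ifs <;> omega

end Psi

-- `psiVec σ i = ψ(σ)_{i+1}`, the coordinate that the syndrome `∑ ψ(σ)_{i+1} h_i` pairs with `h_i`.
def psiVec (σ : List ℤ) (i : ℕ) : ℤ := psiEntry σ ((i : ℤ) + 1) 0

def l1Dist (s : Finset ℕ) (x y : ℕ → ℤ) : ℕ := ∑ i ∈ s, (x i - y i).natAbs

section L1

variable {s : Finset ℕ} {x y : ℕ → ℤ}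

theorem l1Dist_triangle (s : Finset ℕ) (x y z : ℕ → ℤ) :
    l1Dist s x z ≤ l1Dist s x y + l1Dist s y z := by
  rw [l1Dist, l1Dist, l1Dist, ← Finset.sum_add_distrib]
  gcongr with i
  rw [← sub_add_sub_cancel (x i) (y i) (z i)]
  exact Int.natAbs_add_le _ _

theorem l1Dist_le_one {c : ℕ} (hc : ∀ i, i ≠ c → x i = y i) (h1 : (x c - y c).natAbs ≤ 1) :
    l1Dist s x y ≤ 1 :=
  calc l1Dist s x y ≤ ∑ i ∈ insert c s, (x i - y i).natAbs :=
        Finset.sum_le_sum_of_subset (Finset.subset_insert _ _)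
    _ = (x c - y c).natAbs :=
        Finset.sum_eq_single_of_mem c (Finset.mem_insert_self _ _) fun i _ hi => by simp [hc i hi]
    _ ≤ 1 := h1

end L1

section PsiVec

variable {s : Finset ℕ} {σ τ : List ℤ}

theorem AdjTrans.l1Dist_psiVec_le_one (h : AdjTrans σ τ) : l1Dist s (psiVec σ) (psiVec τ) ≤ 1 := by
  obtain ⟨c, hc, h1⟩ := h.psiEntry_eq_except
  by_cases hc' : ∃ i : ℕ, (i : ℤ) + 1 = c
  · obtain ⟨i, rfl⟩ := hc'
    exact l1Dist_le_one (c := i) (fun j hj => congrArg Nat.cast (hc _ (by omega))) h1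
  · exact l1Dist_le_one (c := 0) (fun j _ => congrArg Nat.cast (hc _ fun h => hc' ⟨j, h⟩))
      (by simp only [psiVec]; rw [hc _ fun h => hc' ⟨0, h⟩, sub_self]; simp)

theorem StepsTo.l1Dist_psiVec_le {n : ℕ} (h : StepsTo n σ τ) :
    l1Dist s (psiVec σ) (psiVec τ) ≤ n := by
  induction n generalizing σ with
  | zero =>
    obtain rfl : σ = τ := h
    simp [l1Dist]
  | succ n ih =>
    obtain ⟨ρ, h₁, h₂⟩ := h
    have := l1Dist_triangle s (psiVec σ) (psiVec ρ) (psiVec τ)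
    have := h₁.l1Dist_psiVec_le_one (s := s)
    have := ih h₂
    omega

theorem l1Dist_psiVec_le_dK (h : σ.Perm τ) : l1Dist s (psiVec σ) (psiVec τ) ≤ dK σ τ :=
  (stepsTo_dK h).l1Dist_psiVec_le

end PsiVec

theorem eq_of_psiVec_eq : ∀ {k : ℕ} {σ σ' : List ℤ}, permList k σ → permList k σ' →
    (∀ i ∈ Finset.Icc 1 (k - 1), psiVec σ i = psiVec σ' i) → σ = σ'
  | 0, _, _, h, h', _ => by
    rw [List.length_eq_zero_iff.mp h.length_eq, List.length_eq_zero_iff.mp h'.length_eq]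
  | k + 1, _, _, h, h', hψ => by
    obtain ⟨l₁, l₂, rfl, he⟩ := h.exists_eq_append_cons
    obtain ⟨l₁', l₂', rfl, he'⟩ := h'.exists_eq_append_cons
    have hlen : ∀ {m₁ m₂ : List ℤ}, permList k (m₁ ++ m₂) →
        psiVec (m₁ ++ ((k : ℤ) + 1) :: m₂) k = m₂.length := fun {m₁ m₂} hm => by
      have hle : ∀ x ∈ m₁ ++ m₂, x ≤ (k : ℤ) := fun x hx => (hm.mem_iff.mp hx).2
      have hK : (k : ℤ) + 1 ∉ m₁ := fun hK => by simpa using hle _ (List.mem_append_left m₂ hK)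
      rw [psiVec, psiEntry_append_of_notMem hK, psiEntry_cons_self,
        List.countP_eq_length.mpr fun x hx =>
          decide_eq_true (Int.lt_add_one_of_le (hle x (List.mem_append_right m₁ hx)))]
    have herase : ∀ (m₁ m₂ : List ℤ), ∀ i ∈ Finset.Icc 1 (k - 1),
        psiVec (m₁ ++ ((k : ℤ) + 1) :: m₂) i = psiVec (m₁ ++ m₂) i := fun m₁ m₂ i hi => by
      rw [Finset.mem_Icc] at hi
      exact congrArg Nat.cast (psiEntry_append_cons_of_lt (by omega) m₁ m₂)
    have hl₂ : l₂.length = l₂'.length := by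
      rcases Nat.eq_zero_or_pos k with rfl | hk
      · have := he.length_eq
        have := he'.length_eq
        simp_all
      · exact_mod_cast (hlen he).symm.trans ((hψ k (by simp; omega)).trans (hlen he'))
    have hrest := eq_of_psiVec_eq he he' fun i hi => by
      rw [← herase l₁ l₂ i hi, ← herase l₁' l₂' i hi]
      exact hψ i (Finset.Icc_subset_Icc_right (by omega) hi)
    obtain ⟨rfl, rfl⟩ := List.append_inj' hrest hl₂
    rfl

theorem exists_sum_natAbs_le_of_le_add (d : ℕ → ℤ) (s : Finset ℕ) :
    ∀ a b : ℕ, ∑ i ∈ s, (d i).natAbs ≤ a + b →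
      ∃ e : ℕ → ℤ, ∑ i ∈ s, (e i).natAbs ≤ a ∧ ∑ i ∈ s, (d i - e i).natAbs ≤ b := by
  induction s using Finset.induction_on with
  | empty => exact fun _ _ _ => ⟨0, by simp, by simp⟩
  | insert j s hj ih =>
    intro a b hab
    rw [Finset.sum_insert hj] at hab
    set c := min a (d j).natAbs
    let v : ℤ := if 0 ≤ d j then c else -c
    have hv : v.natAbs = c := by simp only [v]; split_ifs <;> simp
    have hdv : (d j - v).natAbs = (d j).natAbs - c := by simp only [v]; split_ifs <;> omega
    obtain ⟨e, he, hde⟩ := ih (a - c) (b - ((d j).natAbs - c)) (by omega)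
    have hoff : ∀ i ∈ s, Function.update e j v i = e i :=
      fun i hi => Function.update_of_ne (ne_of_mem_of_not_mem hi hj) _ _
    have h₁ : ∑ i ∈ s, (Function.update e j v i).natAbs = ∑ i ∈ s, (e i).natAbs :=
      Finset.sum_congr rfl fun i hi => by rw [hoff i hi]
    have h₂ : ∑ i ∈ s, (d i - Function.update e j v i).natAbs = ∑ i ∈ s, (d i - e i).natAbs :=
      Finset.sum_congr rfl fun i hi => by rw [hoff i hi]
    refine ⟨Function.update e j v, ?_, ?_⟩
    · rw [Finset.sum_insert hj, h₁, Function.update_self, hv]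
      omega
    · rw [Finset.sum_insert hj, h₂, Function.update_self, hdv]
      omega

theorem two_mul_add_one_le_l1Dist {M : ℤ} {t : ℕ} {s : Finset ℕ} {h : ℕ → ℤ}
    (hdist : ∀ e e' : ℕ → ℤ, ∑ i ∈ s, (e i).natAbs ≤ t → ∑ i ∈ s, (e' i).natAbs ≤ t →
      ∑ i ∈ s, e i * h i ≡ ∑ i ∈ s, e' i * h i [ZMOD M] → ∀ i ∈ s, e i = e' i)
    {x y : ℕ → ℤ} (hxy : ∑ i ∈ s, x i * h i ≡ ∑ i ∈ s, y i * h i [ZMOD M])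
    (hne : ∃ i ∈ s, x i ≠ y i) : 2 * t + 1 ≤ l1Dist s x y := by
  by_contra! hlt
  obtain ⟨e, he, hde⟩ :=
    exists_sum_natAbs_le_of_le_add (x - y) s t t (by rw [l1Dist] at hlt; simp; omega)
  have he' : ∑ i ∈ s, ((e - (x - y)) i).natAbs ≤ t := by
    refine le_of_eq_of_le (Finset.sum_congr rfl fun i _ => ?_) hde
    simp only [Pi.sub_apply]
    omega
  have hmod : ∑ i ∈ s, e i * h i ≡ ∑ i ∈ s, (e - (x - y)) i * h i [ZMOD M] := by
    rw [Int.modEq_iff_dvd] at hxy ⊢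
    convert hxy using 1
    simp only [Pi.sub_apply, sub_mul, Finset.sum_sub_distrib]
    ring
  obtain ⟨i, hi, hxyi⟩ := hne
  have := hdist e _ he he' hmod i hi
  simp only [Pi.sub_apply] at this
  exact hxyi (by linarith)

theorem le_dK_starP {k r : ℕ} {σ σ' ρ ρ' : List ℤ} (hσ : permList k σ) (hσ' : permList k σ')
    (hρ : (ρ : Multiset ℤ) = Mkr k r) (hρ' : (ρ' : Multiset ℤ) = Mkr k r) :
    dK σ σ' + dK ρ ρ' ≤ dK (starP σ ρ) (starP σ' ρ') := by
  have hα := permList_starP hσ hρ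
  have h := dK_restrictTo_add_dK_mapToZero_le (k := k)
    (fun x hx => ((hα.mem_iff).mp hx).1) (hα.perm (permList_starP hσ' hρ'))
  rwa [restrictTo_starP hσ hρ, restrictTo_starP hσ' hρ', mapToZero_starP hσ hρ,
    mapToZero_starP hσ' hρ'] at h

def codeIndex (k Mt : ℕ) (h : ℕ → ℤ) (σ : List ℤ) : ℕ :=
  ((∑ i ∈ Finset.Icc 1 (k - 1), psiVec σ i * h i) % (Mt : ℤ)).toNat

section codeIndex

variable {k Mt : ℕ} {h : ℕ → ℤ}

theorem codeIndex_lt (hMt : 0 < Mt) (σ : List ℤ) : codeIndex k Mt h σ < Mt := by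
  have := Int.emod_lt_of_pos (∑ i ∈ Finset.Icc 1 (k - 1), psiVec σ i * h i)
    (by omega : (0 : ℤ) < Mt)
  rw [codeIndex]
  omega

theorem modEq_of_codeIndex_eq (hMt : 0 < Mt) {σ σ' : List ℤ}
    (heq : codeIndex k Mt h σ = codeIndex k Mt h σ') :
    ∑ i ∈ Finset.Icc 1 (k - 1), psiVec σ i * h i ≡
      ∑ i ∈ Finset.Icc 1 (k - 1), psiVec σ' i * h i [ZMOD Mt] := by
  have := Int.emod_nonneg (∑ i ∈ Finset.Icc 1 (k - 1), psiVec σ i * h i) (by omega : (Mt : ℤ) ≠ 0)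
  have := Int.emod_nonneg (∑ i ∈ Finset.Icc 1 (k - 1), psiVec σ' i * h i) (by omega : (Mt : ℤ) ≠ 0)
  rw [codeIndex, codeIndex] at heq
  rw [Int.ModEq]
  omega

end codeIndex

/-- Theorem 5, main construction. Let `h 1, …, h (k-1)` and `M_t > 0` be
integers such that for every integer vector `e ∈ Z^{k-1}` of Manhattan weight at most `t`
the sums `∑_{i=1}^{k-1} e i · h i` are all distinct modulo `M_t`.  Assume there is a code
`C_r ⊆ S(M_{k,r})` with minimum Kendall τ-distance `2t` containing distinct codewords
`ρ 0, ρ 1, …, ρ (M_t - 1)`.  Then the code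
`C = {σ ∗ ρ j : σ ∈ S_k, ∑_{i=1}^{k-1} (ψ(σ))_{i+1} · h i ≡ j (mod M_t)} ⊆ S_{k+r}` is a
`(k+r, k)` systematic `t`-error-correcting code: every `σ ∈ S_k` is the restriction of
exactly one codeword, and distinct codewords are at Kendall τ-distance at least `2t+1`. -/
theorem stmt14 (k r t Mt : ℕ) (hMt : 0 < Mt) (h : ℕ → ℤ)
    (hdist : ∀ e e' : ℕ → ℤ,
      (∑ i ∈ Finset.Icc 1 (k - 1), (e i).natAbs) ≤ t →
      (∑ i ∈ Finset.Icc 1 (k - 1), (e' i).natAbs) ≤ t →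
      Int.ModEq (Mt : ℤ) (∑ i ∈ Finset.Icc 1 (k - 1), e i * h i)
        (∑ i ∈ Finset.Icc 1 (k - 1), e' i * h i) →
      ∀ i ∈ Finset.Icc 1 (k - 1), e i = e' i)
    (ρ : ℕ → List ℤ)
    (hρmem : ∀ j, j < Mt → (↑(ρ j) : Multiset ℤ) = Mkr k r)
    (hρ : ∀ j j', j < Mt → j' < Mt → j ≠ j' → ρ j ≠ ρ j' ∧ 2 * t ≤ dK (ρ j) (ρ j'))
    (C : Set (List ℤ))
    (hC : C = {α : List ℤ | ∃ σ : List ℤ, permList k σ ∧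
      α = starP σ (ρ (((∑ i ∈ Finset.Icc 1 (k - 1),
        (psiEntry σ ((i : ℤ) + 1) 0 : ℤ) * h i) % (Mt : ℤ)).toNat))}) :
    (∀ α ∈ C, permList (k + r) α) ∧
    (∀ σ : List ℤ, permList k σ → ∃! α, α ∈ C ∧ restrictTo k α = σ) ∧
    (∀ α ∈ C, ∀ β ∈ C, α ≠ β → 2 * t + 1 ≤ dK α β) := by
  have hC' : C = {α | ∃ σ, permList k σ ∧ α = starP σ (ρ (codeIndex k Mt h σ))} := hC
  subst hC'
  have hρσ : ∀ σ, (ρ (codeIndex k Mt h σ) : Multiset ℤ) = Mkr k r :=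
    fun σ => hρmem _ (codeIndex_lt hMt σ)
  refine ⟨?_, fun σ hσ => ?_, ?_⟩
  · rintro _ ⟨σ, hσ, rfl⟩
    exact permList_starP hσ (hρσ σ)
  · refine ⟨_, ⟨⟨σ, hσ, rfl⟩, restrictTo_starP hσ (hρσ σ)⟩, ?_⟩
    rintro _ ⟨⟨σ', hσ', rfl⟩, hres⟩
    rw [restrictTo_starP hσ' (hρσ σ')] at hres
    rw [hres]
  · rintro _ ⟨σ, hσ, rfl⟩ _ ⟨σ', hσ', rfl⟩ hne
    have hσσ' : σ ≠ σ' := by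
      rintro rfl
      exact hne rfl
    refine le_trans ?_ (le_dK_starP hσ hσ' (hρσ σ) (hρσ σ'))
    by_cases hj : codeIndex k Mt h σ = codeIndex k Mt h σ'
    · have hψ : ∃ i ∈ Finset.Icc 1 (k - 1), psiVec σ i ≠ psiVec σ' i := by
        by_contra! hψ
        exact hσσ' (eq_of_psiVec_eq hσ hσ' hψ)
      have := two_mul_add_one_le_l1Dist hdist (modEq_of_codeIndex_eq hMt hj) hψ
      have := l1Dist_psiVec_le_dK (s := Finset.Icc 1 (k - 1)) (hσ.perm hσ')
      omega
    · have := one_le_dK (hσ.perm hσ') hσσ'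
      have := (hρ _ _ (codeIndex_lt hMt σ) (codeIndex_lt hMt σ') hj).2
      omega
end

section
/- Let K = {1^{m_1}, 2^{m_2}, ..., ℓ^{m_ℓ}} be a multiset with k = Σ_{i=1}^{ℓ} m_i elements, let R = {ℓ+1, ℓ+1} and M = {0^k, ℓ+1, ℓ+1}. Then there exists a systematic single-error-correcting code C ⊆ S(K ∪ R): for every multi-permutation σ ∈ S(K) there is exactly one codeword α ∈ C whose restriction to the elements of K equals σ (i.e., deleting the two occurrences of ℓ+1 from α yields σ), and distinct codewords of C have Kendall τ-distance at least 3. -/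
/-!
Weight the occurrences of `K + {z, z}` by distinct numbers in `1, …, k + 2` and let `wInv` count
inversions, each weighted by the weight of its larger entry. An adjacent transposition changes
`wInv` by exactly the weight of the larger of the two entries it exchanges, so if all codewords
have `wInv ≡ 0` modulo some `M > 2 (k + 2)`, two distinct codewords cannot be one transposition
apart, nor two, since the second transposition would have to move the same occurrence back.

A multi-permutation `σ ∈ S(K)` is extended by inserting the two copies of `z` with `p` and `q ≤ p`
entries to their right, which adds `w_k p + w_{k+1} q` to `wInv σ`. With `M = 2k + 5` and
redundancy weights `1, 2` every residue is reached once `k ≥ 6`; for `k ≤ 5` the weights are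
chosen so that this holds for all values `wInv σ` can take: the occurrence of rank `i` in `σ` has at
most `i` smaller entries to its right.
-/

open Set

namespace KendallCode

lemma stepsTo_trans {m n : ℕ} {σ τ π : List ℤ} (h₁ : StepsTo m σ τ) (h₂ : StepsTo n τ π) :
    StepsTo (m + n) σ π := by
  induction m generalizing σ with
  | zero => rw [Nat.zero_add]; exact (show σ = τ from h₁) ▸ h₂
  | succ m ih =>
    obtain ⟨ρ, hσρ, hρτ⟩ := h₁
    rw [Nat.succ_add]
    exact ⟨ρ, hσρ, ih hρτ⟩

lemma adjTrans_cons {σ π : List ℤ} (a : ℤ) (h : AdjTrans σ π) : AdjTrans (a :: σ) (a :: π) := by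
  obtain ⟨l₁, l₂, x, y, hxy, rfl, rfl⟩ := h
  exact ⟨a :: l₁, l₂, x, y, hxy, rfl, rfl⟩

lemma stepsTo_cons {n : ℕ} {σ π : List ℤ} (a : ℤ) (h : StepsTo n σ π) :
    StepsTo n (a :: σ) (a :: π) := by
  induction n generalizing σ with
  | zero => exact congrArg _ (show σ = π from h)
  | succ n ih =>
    obtain ⟨τ, hστ, hτπ⟩ := h
    exact ⟨a :: τ, adjTrans_cons a hστ, ih hτπ⟩

lemma exists_stepsTo_of_perm {σ π : List ℤ} (h : σ.Perm π) : ∃ n, StepsTo n σ π := by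
  induction h with
  | nil => exact ⟨0, rfl⟩
  | cons a _ ih =>
    obtain ⟨n, hn⟩ := ih
    exact ⟨n, stepsTo_cons a hn⟩
  | swap x y l =>
    by_cases hxy : x = y
    · exact ⟨0, by rw [hxy]; rfl⟩
    · exact ⟨1, x :: y :: l, ⟨[], l, y, x, Ne.symm hxy, rfl, rfl⟩, rfl⟩
  | trans _ _ ih₁ ih₂ =>
    obtain ⟨m, hm⟩ := ih₁
    obtain ⟨n, hn⟩ := ih₂
    exact ⟨m + n, stepsTo_trans hm hn⟩

lemma three_le_dK {σ π : List ℤ} (hperm : σ.Perm π) (h₀ : σ ≠ π) (h₁ : ¬ StepsTo 1 σ π)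
    (h₂ : ¬ StepsTo 2 σ π) : 3 ≤ dK σ π := by
  refine le_csInf (exists_stepsTo_of_perm hperm) fun n hn => ?_
  by_contra! hn3
  interval_cases n
  exacts [h₀ hn, h₁ hn, h₂ hn]

def SwapDown (x : ℤ) (j : ℕ) (σ π : List ℤ) : Prop :=
  ∃ (l r : List ℤ) (y : ℤ), y < x ∧ j = r.count x ∧ σ = l ++ x :: y :: r ∧ π = l ++ y :: x :: r

lemma adjTrans_iff_swapDown {σ π : List ℤ} :
    AdjTrans σ π ↔ ∃ x j, SwapDown x j σ π ∨ SwapDown x j π σ := by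
  constructor
  · rintro ⟨l, r, a, b, hab, rfl, rfl⟩
    rcases hab.lt_or_gt with h | h
    · exact ⟨b, r.count b, Or.inr ⟨l, r, a, h, rfl, rfl, rfl⟩⟩
    · exact ⟨a, r.count a, Or.inl ⟨l, r, b, h, rfl, rfl, rfl⟩⟩
  · rintro ⟨x, j, ⟨l, r, y, h, -, rfl, rfl⟩ | ⟨l, r, y, h, -, rfl, rfl⟩⟩
    · exact ⟨l, r, x, y, h.ne', rfl, rfl⟩
    · exact ⟨l, r, y, x, h.ne, rfl, rfl⟩

lemma SwapDown.perm {x : ℤ} {j : ℕ} {σ π : List ℤ} (h : SwapDown x j σ π) : σ.Perm π := by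
  obtain ⟨l, r, y, -, -, rfl, rfl⟩ := h
  exact (List.Perm.swap y x r).append_left l

lemma SwapDown.lt_count {x : ℤ} {j : ℕ} {σ π : List ℤ} (h : SwapDown x j σ π) :
    j < σ.count x := by
  obtain ⟨l, r, y, hy, rfl, rfl, -⟩ := h
  simp [hy.ne]
  omega

lemma eq_of_append_cons_eq {x : ℤ} {u u' v v' : List ℤ} (h : u ++ x :: v = u' ++ x :: v')
    (hc : v.count x = v'.count x) : u = u' ∧ v = v' := by
  induction u generalizing u' with
  | nil =>
    cases u' with
    | nil => simpa using h
    | cons w u' =>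
      obtain ⟨-, rfl⟩ := List.cons_eq_cons.mp h
      simp at hc
      omega
  | cons a u ih =>
    cases u' with
    | nil =>
      obtain ⟨-, rfl⟩ := List.cons_eq_cons.mp h
      simp at hc
      omega
    | cons w u' =>
      obtain ⟨rfl, h'⟩ := List.cons_eq_cons.mp h
      obtain ⟨rfl, rfl⟩ := ih h'
      exact ⟨rfl, rfl⟩

lemma SwapDown.eq_of_left {x : ℤ} {j : ℕ} {τ σ π : List ℤ} (hσ : SwapDown x j τ σ)
    (hπ : SwapDown x j τ π) : σ = π := by
  obtain ⟨l, r, y, hy, rfl, rfl, rfl⟩ := hσ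
  obtain ⟨l', r', y', hy', hj, h, rfl⟩ := hπ
  obtain ⟨rfl, h'⟩ := eq_of_append_cons_eq h (by simpa [List.count_cons, hy.ne, hy'.ne] using hj)
  obtain ⟨rfl, rfl⟩ := List.cons_eq_cons.mp h'
  rfl

lemma SwapDown.eq_of_right {x : ℤ} {j : ℕ} {τ σ π : List ℤ} (hσ : SwapDown x j σ τ)
    (hπ : SwapDown x j π τ) : σ = π := by
  obtain ⟨l, r, y, -, hj, rfl, hτ⟩ := hσ
  obtain ⟨l', r', y', -, hj', rfl, hτ'⟩ := hπ
  have h : (l ++ [y]) ++ x :: r = (l' ++ [y']) ++ x :: r' := by simpa using hτ.symm.trans hτ'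
  obtain ⟨hl, rfl⟩ := eq_of_append_cons_eq h (hj.symm.trans hj')
  obtain ⟨rfl, hy⟩ := List.append_inj' hl rfl
  simp_all

def wInv (W : ℤ × ℕ → ℕ) : List ℤ → ℕ
  | [] => 0
  | x :: t => W (x, t.count x) * t.countP (· < x) + wInv W t

lemma wInv_swap (W : ℤ × ℕ → ℕ) {x y : ℤ} (hyx : y < x) (l r : List ℤ) :
    wInv W (l ++ x :: y :: r) = wInv W (l ++ y :: x :: r) + W (x, r.count x) := by
  induction l with
  | nil =>
    simp [wInv, hyx, hyx.ne, hyx.ne', hyx.not_gt]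
    ring
  | cons u l ih =>
    have hp : (l ++ x :: y :: r).Perm (l ++ y :: x :: r) := (List.Perm.swap y x r).append_left l
    simp only [List.cons_append, wInv, ih, hp.count_eq, hp.countP_eq]
    ring

lemma SwapDown.wInv_eq (W : ℤ × ℕ → ℕ) {x : ℤ} {j : ℕ} {σ π : List ℤ} (h : SwapDown x j σ π) :
    wInv W σ = wInv W π + W (x, j) := by
  obtain ⟨l, r, y, hy, rfl, rfl, rfl⟩ := h
  exact wInv_swap W hy l r

lemma wInv_insert (W : ℤ × ℕ → ℕ) {z : ℤ} {l : List ℤ} (hl : ∀ u ∈ l, u < z) (r : List ℤ) :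
    wInv W (l ++ z :: r) = wInv W (l ++ r) + W (z, r.count z) * r.countP (· < z) := by
  induction l with
  | nil => simp [wInv, add_comm]
  | cons u l ih =>
    have hu := hl u List.mem_cons_self
    simp [wInv, ih fun v hv => hl v (List.mem_cons_of_mem u hv), List.count_append,
      List.countP_append, hu.ne', hu.not_gt]
    ring

/-- `(x, j)` stands for the occurrence of `x` with `j` further copies of `x` to its right. -/
def occCoords (μ : Multiset ℤ) : Set (ℤ × ℕ) := {c | c.2 < μ.count c.1}

lemma SwapDown.mem_occCoords {x : ℤ} {j : ℕ} {σ π : List ℤ} (h : SwapDown x j σ π) :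
    (x, j) ∈ occCoords σ := by
  simpa [occCoords] using h.lt_count

lemma SwapDown.mem_occCoords' {x : ℤ} {j : ℕ} {σ π : List ℤ} (h : SwapDown x j σ π) :
    (x, j) ∈ occCoords π :=
  Multiset.coe_eq_coe.mpr h.perm ▸ h.mem_occCoords

section Separation

variable {W : ℤ × ℕ → ℕ} {B M : ℕ} {σ τ π : List ℤ}

lemma eq_of_add_modEq_add {c a b : ℕ} (h : c + a ≡ c + b [MOD M]) (ha : a < M) (hb : b < M) :
    a = b :=
  (Nat.ModEq.add_left_cancel' c h).eq_of_lt_of_lt ha hb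

lemma not_add_modEq_self {a w : ℕ} (hw : 0 < w) (hwM : w < M) : ¬ a + w ≡ a [MOD M] :=
  fun h => (Nat.le_of_dvd hw (Nat.add_modEq_left_iff.mp h)).not_gt hwM

lemma not_modEq_of_adjTrans (hBM : 2 * B < M) (hW : MapsTo W (occCoords σ) (Icc 1 B))
    (h : AdjTrans σ τ) : ¬ wInv W σ ≡ wInv W τ [MOD M] := by
  obtain ⟨x, j, hd | hd⟩ := adjTrans_iff_swapDown.mp h
  · have hw := hW hd.mem_occCoords
    simp only [mem_Icc] at hw
    rw [hd.wInv_eq W]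
    exact not_add_modEq_self (by omega) (by omega)
  · have hw := hW hd.mem_occCoords'
    simp only [mem_Icc] at hw
    rw [hd.wInv_eq W]
    exact fun h => not_add_modEq_self (by omega) (by omega) h.symm

-- Transpositions in opposite directions have cancelling weights, so by injectivity they move the
-- same occurrence.
lemma eq_of_adjTrans_of_adjTrans (hBM : 2 * B < M) (hW : MapsTo W (occCoords σ) (Icc 1 B))
    (hinj : InjOn W (occCoords σ)) (h₁ : AdjTrans σ τ) (h₂ : AdjTrans τ π)
    (hmod : wInv W σ ≡ wInv W π [MOD M]) : σ = π := by
  have hτ : (τ : Multiset ℤ) = σ := by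
    obtain ⟨x, j, hd | hd⟩ := adjTrans_iff_swapDown.mp h₁
    exacts [(Multiset.coe_eq_coe.mpr hd.perm).symm, Multiset.coe_eq_coe.mpr hd.perm]
  have hW' := hτ ▸ hW
  have hinj' := hτ ▸ hinj
  obtain ⟨x, j, hd₁ | hd₁⟩ := adjTrans_iff_swapDown.mp h₁ <;>
    obtain ⟨x', j', hd₂ | hd₂⟩ := adjTrans_iff_swapDown.mp h₂
  · have hw₁ := hW hd₁.mem_occCoords
    have hw₂ := hW' hd₂.mem_occCoords
    simp only [mem_Icc] at hw₁ hw₂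
    rw [hd₁.wInv_eq W, hd₂.wInv_eq W, add_assoc] at hmod
    exact absurd hmod (not_add_modEq_self (by omega) (by omega))
  · have hw₁ := hW hd₁.mem_occCoords
    have hw₂ := hW' hd₂.mem_occCoords'
    simp only [mem_Icc] at hw₁ hw₂
    rw [hd₁.wInv_eq W, hd₂.wInv_eq W] at hmod
    have hc := hinj hd₁.mem_occCoords (hτ ▸ hd₂.mem_occCoords')
      (eq_of_add_modEq_add hmod (by omega) (by omega))
    obtain ⟨rfl, rfl⟩ := Prod.ext_iff.mp hc
    exact hd₁.eq_of_right hd₂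
  · have hw₁ := hW' hd₁.mem_occCoords
    have hw₂ := hW' hd₂.mem_occCoords
    simp only [mem_Icc] at hw₁ hw₂
    have hmod' : wInv W σ + W (x, j) ≡ wInv W σ + W (x', j') [MOD M] := by
      rw [← hd₁.wInv_eq W, hd₂.wInv_eq W]
      exact Nat.ModEq.add_right _ hmod.symm
    have hc := hinj' hd₁.mem_occCoords hd₂.mem_occCoords
      (eq_of_add_modEq_add hmod' (by omega) (by omega))
    obtain ⟨rfl, rfl⟩ := Prod.ext_iff.mp hc
    exact hd₁.eq_of_left hd₂
  · have hw₁ := hW hd₁.mem_occCoords'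
    have hw₂ := hW' hd₂.mem_occCoords'
    simp only [mem_Icc] at hw₁ hw₂
    rw [hd₂.wInv_eq W, hd₁.wInv_eq W, add_assoc] at hmod
    exact absurd hmod.symm (not_add_modEq_self (by omega) (by omega))

theorem three_le_dK_of_wInv_modEq (hBM : 2 * B < M) (hW : MapsTo W (occCoords σ) (Icc 1 B))
    (hinj : InjOn W (occCoords σ)) (hperm : σ.Perm π) (hne : σ ≠ π)
    (hmod : wInv W σ ≡ wInv W π [MOD M]) : 3 ≤ dK σ π :=
  three_le_dK hperm hne
    (fun ⟨_, h, hπ⟩ => not_modEq_of_adjTrans hBM hW h ((show _ = π from hπ) ▸ hmod))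
    (fun ⟨_, h₁, _, h₂, hπ⟩ =>
      hne (eq_of_adjTrans_of_adjTrans hBM hW hinj h₁ ((show _ = π from hπ) ▸ h₂) hmod))

end Separation

lemma exists_boxed_wInv_eq (w : ℕ → ℕ) {e : ℤ × ℕ → ℕ} {k : ℕ} {σ : List ℤ}
    (he : MapsTo e (occCoords σ) (Iio k)) (hinj : InjOn e (occCoords σ))
    (hle : ∀ c ∈ occCoords σ, σ.countP (· < c.1) ≤ e c) :
    ∃ g : ℕ → ℕ, (∀ i, g i ≤ i) ∧ (∀ i, g i ≠ 0 → i ∈ e '' occCoords σ) ∧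
      wInv (w ∘ e) σ = ∑ i ∈ Finset.range k, w i * g i := by
  induction σ with
  | nil => exact ⟨0, fun _ => Nat.zero_le _, fun _ h => absurd rfl h, by simp [wInv]⟩
  | cons x t ih =>
    have hsub : occCoords t ⊆ occCoords (x :: t : List ℤ) := fun c hc => by
      simp only [occCoords, mem_ofPred_eq, Multiset.coe_count, List.count_cons] at hc ⊢
      omega
    obtain ⟨g, hg, hsupp, hsum⟩ := ih (he.mono_left hsub) (hinj.mono hsub)
      fun c hc => ((List.sublist_cons_self x t).countP_le).trans (hle c (hsub hc))
    have hc₀ : (x, t.count x) ∈ occCoords (x :: t : List ℤ) := by simp [occCoords]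
    have hg₀ : g (e (x, t.count x)) = 0 := by
      by_contra h
      obtain ⟨c, hc, hce⟩ := hsupp _ h
      have := hinj (hsub hc) hc₀ hce
      simp [occCoords, this] at hc
    refine ⟨fun i => g i + if i = e (x, t.count x) then t.countP (· < x) else 0,
      fun i => ?_, fun i hi => ?_, ?_⟩
    · beta_reduce
      split_ifs with h
      · have := hle _ hc₀
        simp only [List.countP_cons, lt_irrefl, decide_false, Bool.false_eq_true, if_false] at this
        rw [h, hg₀]
        omega
      · simpa using hg i
    · by_cases h : i = e (x, t.count x)
      · exact ⟨_, hc₀, h.symm⟩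
      · exact image_mono hsub (hsupp i (by simpa [h] using hi))
    · have := he hc₀
      simp only [mem_Iio] at this
      simp [wInv, hsum, mul_add, Finset.sum_add_distrib, this]
      ring

/-- `w 0, …, w (k - 1)` weigh the information occurrences by rank, `w k` and `w (k + 1)` the left
and the right redundancy symbol; `p` and `q` are the numbers of entries to the right of these. -/
def Covers (k M : ℕ) (w : ℕ → ℕ) : Prop :=
  ∀ g : (i : Fin k) → Fin (i + 1), ∃ p ≤ k, ∃ q ≤ p,
    M ∣ ∑ i : Fin k, w i * g i + w k * p + w (k + 1) * q

instance (k M : ℕ) (w : ℕ → ℕ) : Decidable (Covers k M w) := by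
  unfold Covers; infer_instance

-- Found by computer search.
def smallWeights : ℕ → List ℕ
  | 0 => [1, 2]
  | 1 => [3, 1, 2]
  | 2 => [4, 3, 1, 2]
  | 3 => [3, 5, 4, 1, 2]
  | 4 => [6, 2, 5, 3, 1, 4]
  | 5 => [2, 4, 5, 6, 7, 1, 3]
  | _ => []

def weight (k i : ℕ) : ℕ :=
  if k ≤ 5 then (smallWeights k).getD i 0 else if i < k then i + 3 else i + 1 - k

lemma weight_mapsTo (k : ℕ) : MapsTo (weight k) (Iio (k + 2)) (Icc 1 (k + 2)) := by
  intro i hi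
  simp only [mem_Iio, mem_Icc] at hi ⊢
  rcases le_or_gt k 5 with hk | hk
  · revert i
    interval_cases k <;> decide
  · simp only [weight, hk.not_ge, if_false]
    split_ifs <;> omega

lemma weight_injOn (k : ℕ) : InjOn (weight k) (Iio (k + 2)) := by
  intro i hi j hj hij
  simp only [mem_Iio] at hi hj
  rcases le_or_gt k 5 with hk | hk
  · have : ∀ i < k + 2, ∀ j < k + 2, weight k i = weight k j → i = j := by
      interval_cases k <;> decide
    exact this i hi j hj hij
  · simp only [weight, hk.not_ge, if_false] at hij
    split_ifs at hij <;> omega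

lemma exists_eq_add_two_mul {n k : ℕ} (hn : n + 2 ≤ 3 * k) : ∃ p ≤ k, ∃ q ≤ p, n = p + 2 * q := by
  by_cases h : n ≤ k
  · exact ⟨n, h, 0, Nat.zero_le _, by ring⟩
  · exact ⟨n - 2 * ((n - k + 1) / 2), by omega, (n - k + 1) / 2, by omega, by omega⟩

set_option maxRecDepth 4000 in
lemma covers_weight (k : ℕ) : Covers k (2 * k + 5) (weight k) := by
  rcases le_or_gt k 5 with hk | hk
  · interval_cases k <;> decide
  · unfold Covers
    intro g
    set S := ∑ i : Fin k, weight k i * g i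
    have hw : weight k k = 1 ∧ weight k (k + 1) = 2 := by simp [weight, hk.not_ge]; omega
    rw [hw.1, hw.2]
    have hS := Nat.div_add_mod S (2 * k + 5)
    have hs := Nat.mod_lt S (show 0 < 2 * k + 5 by omega)
    rcases Nat.eq_zero_or_pos (S % (2 * k + 5)) with h0 | h0
    · exact ⟨0, Nat.zero_le _, 0, le_rfl, by simpa using Nat.dvd_of_mod_eq_zero h0⟩
    · obtain ⟨p, hp, q, hq, hpq⟩ :=
        exists_eq_add_two_mul (n := 2 * k + 5 - S % (2 * k + 5)) (k := k) (by omega)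
      refine ⟨p, hp, q, hq, ⟨S / (2 * k + 5) + 1, ?_⟩⟩
      rw [mul_add, mul_one]
      omega

lemma exists_append_append {σ : List ℤ} {p q : ℕ} (hqp : q ≤ p) (hp : p ≤ σ.length) :
    ∃ l m r, σ = l ++ m ++ r ∧ m.length + r.length = p ∧ r.length = q := by
  refine ⟨(σ.take (σ.length - q)).take (σ.length - p), (σ.take (σ.length - q)).drop (σ.length - p),
    σ.drop (σ.length - q), by simp, ?_, ?_⟩ <;> simp <;> omega

lemma wInv_insert_two (W : ℤ × ℕ → ℕ) {z : ℤ} {l m r : List ℤ} (h : ∀ u ∈ l ++ m ++ r, u < z) :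
    wInv W (l ++ z :: (m ++ z :: r)) =
      wInv W (l ++ m ++ r) + W (z, 1) * (m.length + r.length) + W (z, 0) * r.length := by
  have hcount : ∀ {L : List ℤ}, L ⊆ l ++ m ++ r → L.count z = 0 ∧ L.countP (· < z) = L.length :=
    fun hL => ⟨List.count_eq_zero.mpr fun hz => (h z (hL hz)).false,
      List.countP_eq_length.mpr fun u hu => by simpa using h u (hL hu)⟩
  have hm := hcount (L := m) fun u hu => by simp [hu]
  have hr := hcount (L := r) fun u hu => by simp [hu]
  rw [wInv_insert W fun u hu => h u (by simp [hu]), ← List.append_assoc,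
    wInv_insert W fun u hu => h u (List.mem_append_left r hu)]
  simp [List.count_append, List.countP_append, hm.1, hm.2, hr.1, hr.2]
  ring

lemma coe_append_cons_append_cons (z : ℤ) (l m r : List ℤ) :
    ((l ++ z :: (m ++ z :: r) : List ℤ) : Multiset ℤ) =
      ↑(l ++ m ++ r) + Multiset.replicate 2 z := by
  have hperm : (l ++ z :: (m ++ z :: r)).Perm (z :: z :: (l ++ m ++ r)) :=
    List.perm_middle.trans ((List.append_assoc l m _ ▸ List.perm_middle).cons z)
  rw [Multiset.coe_eq_coe.mpr hperm, add_comm]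
  rfl

lemma filter_append_cons_append_cons {z : ℤ} {l m r : List ℤ} (h : z ∉ l ++ m ++ r) :
    (l ++ z :: (m ++ z :: r)).filter (fun x => decide (x ≠ z)) = l ++ m ++ r := by
  have hfil : (l ++ m ++ r).filter (fun x => decide (x ≠ z)) = l ++ m ++ r :=
    List.filter_eq_self.mpr fun u hu => by simpa using ne_of_mem_of_not_mem hu h
  simpa [List.filter_append] using hfil

lemma countP_lt_add_count_le (K : Multiset ℤ) {x y : ℤ} (h : x < y) :
    K.countP (· < x) + K.count x ≤ K.countP (· < y) := by
  induction K using Multiset.induction_on with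
  | empty => simp
  | cons a K ih =>
    simp only [Multiset.countP_cons, Multiset.count_cons]
    split_ifs <;> omega

section Code

variable (K : Multiset ℤ) (z : ℤ)

/-- The occurrences of `K` in increasing order get ranks `0, …, k - 1`; the left copy of `z`
(`j = 1`) gets `k`, the right one `k + 1`. -/
def occRank (c : ℤ × ℕ) : ℕ :=
  if c.1 = z then Multiset.card K + 1 - c.2 else K.countP (· < c.1) + c.2

variable {K z}

lemma occRank_lt_card (hz : ∀ x ∈ K, x < z) {c : ℤ × ℕ} (hc : c ∈ occCoords K) :
    c.1 ≠ z ∧ occRank K z c < Multiset.card K := by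
  obtain ⟨x, j⟩ := c
  simp only [occCoords, mem_ofPred_eq] at hc
  have hxz := hz x (Multiset.count_pos.mp (by omega))
  have := countP_lt_add_count_le K hxz
  rw [Multiset.countP_eq_card.mpr hz] at this
  simp only [occRank, hxz.ne, if_false]
  exact ⟨hxz.ne, by omega⟩

lemma occCoords_add_replicate (hz : ∀ x ∈ K, x < z) {c : ℤ × ℕ} :
    c ∈ occCoords (K + Multiset.replicate 2 z) ↔ c ∈ occCoords K ∨ (c.1 = z ∧ c.2 < 2) := by
  have hzK : K.count z = 0 := Multiset.count_eq_zero.mpr fun h => (hz z h).false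
  obtain ⟨x, j⟩ := c
  simp only [occCoords, mem_ofPred_eq, Multiset.count_add, Multiset.count_replicate]
  by_cases hxz : x = z
  · subst hxz
    simp [hzK]
  · simp [hxz, Ne.symm hxz]

lemma occRank_mapsTo (hz : ∀ x ∈ K, x < z) :
    MapsTo (occRank K z) (occCoords (K + Multiset.replicate 2 z)) (Iio (Multiset.card K + 2)) := by
  intro c hc
  rcases (occCoords_add_replicate hz).mp hc with hc | ⟨hcz, hc2⟩
  · exact (occRank_lt_card hz hc).2.trans (by simp)
  · simp [occRank, hcz]
    omega

lemma occRank_injOn (hz : ∀ x ∈ K, x < z) :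
    InjOn (occRank K z) (occCoords (K + Multiset.replicate 2 z)) := by
  intro c hc c' hc' h
  rcases (occCoords_add_replicate hz).mp hc with hc | ⟨hcz, hc2⟩ <;>
    rcases (occCoords_add_replicate hz).mp hc' with hc' | ⟨hcz', hc2'⟩
  · obtain ⟨x, j⟩ := c
    obtain ⟨x', j'⟩ := c'
    have hx := occRank_lt_card hz hc
    have hx' := occRank_lt_card hz hc'
    simp only [occCoords, mem_ofPred_eq] at hc hc'
    simp only [occRank, hx.1, hx'.1, if_false] at h
    rcases lt_trichotomy x x' with hlt | rfl | hlt
    · have := countP_lt_add_count_le K hlt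
      omega
    · simp only [Prod.mk.injEq, true_and]
      omega
    · have := countP_lt_add_count_le K hlt
      omega
  · have := (occRank_lt_card hz hc).2
    rw [h] at this
    simp only [occRank, hcz', if_true] at this
    omega
  · have := (occRank_lt_card hz hc').2
    rw [← h] at this
    simp only [occRank, hcz, if_true] at this
    omega
  · simp only [occRank, hcz, hcz', if_true] at h
    exact Prod.ext (hcz.trans hcz'.symm) (by omega)

lemma exists_extension (hz : ∀ x ∈ K, x < z) {σ : List ℤ} (hσ : (σ : Multiset ℤ) = K) :
    ∃ α : List ℤ, (α : Multiset ℤ) = K + Multiset.replicate 2 z ∧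
      α.filter (fun x => decide (x ≠ z)) = σ ∧
      wInv (weight (Multiset.card K) ∘ occRank K z) α ≡ 0 [MOD 2 * Multiset.card K + 5] := by
  subst hσ
  have hσz : ∀ u ∈ σ, u < z := fun u hu => hz u (Multiset.mem_coe.mpr hu)
  obtain ⟨g, hg, -, hsum⟩ := exists_boxed_wInv_eq (weight σ.length) (e := occRank σ z)
    (fun c hc => (occRank_lt_card hz hc).2)
    ((occRank_injOn hz).mono fun c hc => (occCoords_add_replicate hz).mpr (Or.inl hc))
    (fun c hc => by simp [occRank, (occRank_lt_card hz hc).1, ← Multiset.coe_countP])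
  obtain ⟨p, hp, q, hq, hdvd⟩ := covers_weight σ.length fun i => ⟨g i, Nat.lt_succ_of_le (hg i)⟩
  obtain ⟨l, m, r, rfl, rfl, rfl⟩ := exists_append_append hq hp
  refine ⟨l ++ z :: (m ++ z :: r), coe_append_cons_append_cons z l m r,
    filter_append_cons_append_cons fun h => (hσz z h).false, ?_⟩
  rw [Multiset.coe_card] at hsum ⊢
  rw [Nat.modEq_zero_iff_dvd, wInv_insert_two _ hσz, hsum,
    ← Fin.sum_univ_eq_sum_range fun i => weight _ i * g i]
  simpa [occRank] using hdvd

end Code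

lemma exists_subset_existsUnique_eq {α β : Type*} {S : Set α} {T : Set β} (f : α → β)
    (h : T ⊆ f '' S) : ∃ C ⊆ S, ∀ b ∈ T, ∃! a, a ∈ C ∧ f a = b := by
  obtain ⟨C, hC, hbij⟩ := exists_subset_bijOn (S ∩ f ⁻¹' T) f
  refine ⟨C, fun a ha => (hC ha).1, fun b hb => ?_⟩
  obtain ⟨a, ha, rfl⟩ := h hb
  obtain ⟨a', ha', hfa'⟩ := hbij.surjOn ⟨a, ⟨ha, hb⟩, rfl⟩
  exact ⟨a', ⟨ha', hfa'⟩, fun a'' ⟨ha'', hfa''⟩ => hbij.injOn ha'' ha' (hfa''.trans hfa'.symm)⟩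

theorem exists_systematic_code (K : Multiset ℤ) (z : ℤ) (hz : ∀ x ∈ K, x < z) :
    ∃ C : Set (List ℤ), (∀ α ∈ C, (α : Multiset ℤ) = K + Multiset.replicate 2 z) ∧
      (∀ σ : List ℤ, (σ : Multiset ℤ) = K →
        ∃! α, α ∈ C ∧ α.filter (fun x => decide (x ≠ z)) = σ) ∧
      (∀ α ∈ C, ∀ β ∈ C, α ≠ β → 3 ≤ dK α β) := by
  set k := Multiset.card K
  set W := weight k ∘ occRank K z
  obtain ⟨C, hC, huniq⟩ := exists_subset_existsUnique_eq
    (S := {α : List ℤ | (α : Multiset ℤ) = K + Multiset.replicate 2 z ∧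
      wInv W α ≡ 0 [MOD 2 * k + 5]})
    (T := {σ : List ℤ | (σ : Multiset ℤ) = K}) (fun α => α.filter (fun x => decide (x ≠ z)))
    fun σ hσ => by
      obtain ⟨α, hαK, hασ, hα0⟩ := exists_extension hz hσ
      exact ⟨α, ⟨hαK, hα0⟩, hασ⟩
  refine ⟨C, fun α hα => (hC hα).1, huniq, fun α hα β hβ hne => ?_⟩
  obtain ⟨hαK, hα0⟩ := hC hα
  obtain ⟨hβK, hβ0⟩ := hC hβ
  refine three_le_dK_of_wInv_modEq (B := k + 2) (by omega) ?_ ?_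
    (Multiset.coe_eq_coe.mp (hαK.trans hβK.symm)) hne (hα0.trans hβ0.symm)
  · rw [hαK]
    exact (weight_mapsTo k).comp (occRank_mapsTo hz)
  · rw [hαK]
    exact (weight_injOn k).comp (occRank_injOn hz) (occRank_mapsTo hz)

end KendallCode

theorem stmt19_general (ℓ : ℕ) (m : ℕ → ℕ) :
    ∃ C : Set (List ℤ),
      (∀ α ∈ C, (↑α : Multiset ℤ) =
        (∑ i ∈ Finset.Icc 1 ℓ, Multiset.replicate (m i) (i : ℤ)) +
          Multiset.replicate 2 ((ℓ : ℤ) + 1)) ∧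
      (∀ σ : List ℤ,
        (↑σ : Multiset ℤ) = ∑ i ∈ Finset.Icc 1 ℓ, Multiset.replicate (m i) (i : ℤ) →
        ∃! α, α ∈ C ∧ α.filter (fun x => decide (x ≠ (ℓ : ℤ) + 1)) = σ) ∧
      (∀ α ∈ C, ∀ β ∈ C, α ≠ β → 3 ≤ dK α β) :=
  KendallCode.exists_systematic_code _ _ fun x hx => by
    obtain ⟨i, hi, hx⟩ := Multiset.mem_sum.mp hx
    rw [Multiset.eq_of_mem_replicate hx]
    have := (Finset.mem_Icc.mp hi).2
    omega

/-- Example 5. Let `K = {1^{m 1}, 2^{m 2}, …, ℓ^{m ℓ}}` be a multiset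
with `k = ∑ m i` elements, let `R = {ℓ+1, ℓ+1}`.  Then there exists a systematic
single-error-correcting code `C ⊆ S(K ∪ R)`: every multi-permutation `σ ∈ S(K)` is
obtained by deleting the two occurrences of `ℓ + 1` from exactly one codeword of `C`, and
distinct codewords of `C` are at Kendall τ-distance at least `3`. -/
theorem stmt19 (ℓ : ℕ) (m : ℕ → ℕ) (hm : ∀ i, 1 ≤ i → i ≤ ℓ → 0 < m i) :
    ∃ C : Set (List ℤ),
      (∀ α ∈ C, (↑α : Multiset ℤ) =
        (∑ i ∈ Finset.Icc 1 ℓ, Multiset.replicate (m i) (i : ℤ)) +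
          Multiset.replicate 2 ((ℓ : ℤ) + 1)) ∧
      (∀ σ : List ℤ,
        (↑σ : Multiset ℤ) = ∑ i ∈ Finset.Icc 1 ℓ, Multiset.replicate (m i) (i : ℤ) →
        ∃! α, α ∈ C ∧ α.filter (fun x => decide (x ≠ (ℓ : ℤ) + 1)) = σ) ∧
      (∀ α ∈ C, ∀ β ∈ C, α ≠ β → 3 ≤ dK α β) :=
  stmt19_general ℓ m
end
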